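/- arXiv:2305.10173 — 5 statements merged into one kernel-verified Lean document; each statement's English description precedes it below -/
import Mathlib

section
/- Let k be an algebraically closed field of characteristic 0 and let γ be an involution of k, i.e. a ring automorphism of k with γ ∘ γ = id and γ ≠ id. Then −1 is not a square in the fixed field k_γ = {κ ∈ k | γ(κ) = κ}; that is, there is no a ∈ k with γ(a) = a and a² = −1. -/
/-!
Since `γ ≠ id`, some `c` is moved by `γ`, and `r := c - γ c` is a nonzero element with
`γ r = -r`. Take `s` with `s ^ 2 = r`. If `a` is fixed with `a ^ 2 = -1`, then
`(γ s) ^ 2 = -r = (a * s) ^ 2`, so `γ s = b * s` with `b = ± a`; applying `γ` once more gives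
`s = γ (γ s) = b ^ 2 * s = -s`, forcing `s = 0` in characteristic `≠ 2`.
-/

namespace RingEquiv

theorem exists_ne_zero_apply_eq_neg {R : Type*} [Ring R] (γ : R ≃+* R)
    (hinv : ∀ x, γ (γ x) = x) (hne : γ ≠ RingEquiv.refl R) : ∃ r : R, r ≠ 0 ∧ γ r = -r := by
  obtain ⟨c, hc⟩ : ∃ c, γ c ≠ c := by
    by_contra! h
    exact hne (RingEquiv.ext h)
  refine ⟨c - γ c, sub_ne_zero.mpr hc.symm, ?_⟩
  rw [map_sub, hinv, neg_sub]

section Involution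

variable {R : Type*} [CommRing R] (γ : R ≃+* R)

theorem eq_neg_of_apply_eq_mul (hinv : ∀ x, γ (γ x) = x) {b s : R} (hb : γ b = b)
    (hb2 : b ^ 2 = -1) (hs : γ s = b * s) : s = -s :=
  calc s = γ (γ s) := (hinv s).symm
    _ = b ^ 2 * s := by rw [hs, map_mul, hb, hs]; ring
    _ = -s := by rw [hb2]; ring

theorem eq_zero_of_apply_sq_eq_neg [IsDomain R] [NeZero (2 : R)] (hinv : ∀ x, γ (γ x) = x)
    {a s : R} (ha : γ a = a) (ha2 : a ^ 2 = -1) (hs : γ (s ^ 2) = -s ^ 2) : s = 0 := by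
  have hsq : (γ s) ^ 2 = (a * s) ^ 2 := by
    rw [← map_pow, hs, mul_pow, ha2]; ring
  have hneg : s = -s := by
    rcases sq_eq_sq_iff_eq_or_eq_neg.mp hsq with h | h
    · exact eq_neg_of_apply_eq_mul γ hinv ha ha2 h
    · exact eq_neg_of_apply_eq_mul γ hinv (b := -a) (by rw [map_neg, ha]) (by rw [neg_sq, ha2])
        (by rw [h, neg_mul])
  have h2s : (2 : R) * s = 0 := by linear_combination hneg
  exact (mul_eq_zero.mp h2s).resolve_left two_ne_zero

end Involution

end RingEquiv

theorem stmt_0 (k : Type*) [Field k] [IsAlgClosed k] [CharZero k]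
    (γ : k ≃+* k) (hinv : ∀ x, γ (γ x) = x) (hne : γ ≠ RingEquiv.refl k) :
    ¬ ∃ a : k, γ a = a ∧ a ^ 2 = -1 := by
  rintro ⟨a, ha, ha2⟩
  obtain ⟨r, hr0, hγr⟩ := γ.exists_ne_zero_apply_eq_neg hinv hne
  obtain ⟨s, rfl⟩ := IsAlgClosed.exists_pow_nat_eq r two_pos
  exact hr0 (by rw [γ.eq_zero_of_apply_sq_eq_neg hinv ha ha2 hγr]; ring)
end

section
/- The Galois group Gal(ℂ/Q̄) is torsion-free: if σ is a ring automorphism of ℂ that fixes every algebraic number (every element of ℂ that is algebraic over ℚ) and σ^n = id for some integer n ≥ 1, then σ = id. -/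
open Finset Polynomial

lemma isAlgebraic_of_pow_eq_one' {z : ℂ} {k : ℕ} (hk : k ≠ 0) (hz : z ^ k = 1) :
    IsAlgebraic ℚ z :=
  ⟨X ^ k - C 1, (monic_X_pow_sub_C (1 : ℚ) hk).ne_zero, by simp [hz]⟩

lemma shift_sum {m : ℕ} (g : ℕ → ℂ) (hg : g m = g 0) :
    ∑ k ∈ Finset.range m, g (k + 1) = ∑ k ∈ Finset.range m, g k := by
  have h1 := Finset.sum_range_succ g m
  have h2 := Finset.sum_range_succ' g m
  rw [h1, hg] at h2
  exact (add_right_cancel h2).symm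

lemma shift_prod {m : ℕ} (g : ℕ → ℂ) (hg : g m = g 0) (h0 : g 0 ≠ 0) :
    ∏ k ∈ Finset.range m, g (k + 1) = ∏ k ∈ Finset.range m, g k := by
  have h1 := Finset.prod_range_succ g m
  have h2 := Finset.prod_range_succ' g m
  rw [h1, hg] at h2
  exact (mul_right_cancel₀ h0 h2).symm

theorem stmt_7 (σ : RingAut ℂ) (hfix : ∀ z : ℂ, IsAlgebraic ℚ z → σ z = z)
    (n : ℕ) (hn : 1 ≤ n) (hpow : σ ^ n = 1) : σ = 1 := by
  by_contra hσ
  have hdvd : orderOf σ ∣ n := orderOf_dvd_of_pow_eq_one hpow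
  set m := orderOf σ with hmdef
  have hm0 : m ≠ 0 := by
    intro h
    rw [h] at hdvd
    omega
  have hm1 : m ≠ 1 := fun h => hσ (orderOf_eq_one_iff.mp h)
  have hm2 : 1 < m := by omega
  have hσm : σ ^ m = 1 := pow_orderOf_eq_one σ
  have hfixroot : ∀ {k : ℕ}, k ≠ 0 → ∀ {w : ℂ}, w ^ k = 1 → σ w = w := by
    intro k hk w hw
    exact hfix _ (isAlgebraic_of_pow_eq_one' hk hw)
  set ζ : ℂ := Complex.exp (2 * Real.pi * Complex.I / m) with hζdef
  have hζ : IsPrimitiveRoot ζ m := Complex.isPrimitiveRoot_exp m hm0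
  have hζm : ζ ^ m = 1 := hζ.pow_eq_one
  have hζ1 : ζ ≠ 1 := hζ.ne_one hm2
  have hσζ : σ ζ = ζ := hfixroot hm0 hζm
  have hσkζ : ∀ k : ℕ, (σ ^ k) ζ = ζ := by
    intro k
    induction k with
    | zero => rfl
    | succ k ih =>
      rw [pow_succ]
      show (σ ^ k) (σ ζ) = ζ
      rw [hσζ, ih]
  -- Dedekind independence of characters gives z with nonzero resolvent
  have hli : LinearIndependent ℂ (fun k : Fin m => ⇑(σ ^ (k : ℕ))) := by
    have hinj : Function.Injective
        (fun k : Fin m => ((σ ^ (k : ℕ) : RingAut ℂ) : ℂ →+* ℂ).toMonoidHom) := by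
      intro j k h
      have hjk : (σ ^ (j : ℕ)) = (σ ^ (k : ℕ)) := by
        ext x
        exact DFunLike.congr_fun h x
      have hj2 : (j : ℕ) ∈ Set.Iio (orderOf σ) := by simpa [← hmdef] using j.2
      have hk2 : (k : ℕ) ∈ Set.Iio (orderOf σ) := by simpa [← hmdef] using k.2
      exact Fin.ext (pow_injOn_Iio_orderOf (x := σ) hj2 hk2 hjk)
    have h2 := (linearIndependent_monoidHom ℂ ℂ).comp _ hinj
    convert h2 using 2 <;> rfl
  obtain ⟨z, hz0⟩ : ∃ z : ℂ, ∑ k ∈ Finset.range m, ζ ^ k * (σ ^ k) z ≠ 0 := by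
    by_contra h
    push_neg at h
    have hall := Fintype.linearIndependent_iff.mp hli (fun k : Fin m => ζ ^ (k : ℕ)) ?_ ⟨0, by omega⟩
    · simp at hall
    · funext w
      have := h w
      simpa [Finset.sum_apply, Fin.sum_univ_eq_sum_range (fun k => ζ ^ k * (⇑σ)^[k] w) m]
        using this
  set α := ∑ k ∈ Finset.range m, ζ ^ k * (σ ^ k) z with hαdef
  have hshift : ζ * σ α = α := by
    have hσα : σ α = ∑ k ∈ Finset.range m, ζ ^ k * (σ ^ (k + 1)) z := by
      rw [hαdef, map_sum]
      refine Finset.sum_congr rfl fun k _ => ?_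
      rw [map_mul, map_pow, hσζ]
      congr 1
      rw [pow_succ']
      rfl
    rw [hσα, Finset.mul_sum]
    calc ∑ k ∈ Finset.range m, ζ * (ζ ^ k * (σ ^ (k + 1)) z)
        = ∑ k ∈ Finset.range m, (fun j => ζ ^ j * (σ ^ j) z) (k + 1) := by
          refine Finset.sum_congr rfl fun k _ => ?_
          show ζ * (ζ ^ k * (σ ^ (k + 1)) z) = ζ ^ (k + 1) * (σ ^ (k + 1)) z
          ring
      _ = α := shift_sum (fun j => ζ ^ j * (σ ^ j) z)
          (by show ζ ^ m * (σ ^ m) z = ζ ^ 0 * (σ ^ 0) z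
              rw [hζm, hσm, pow_zero, pow_zero])
  have heig : ∀ k : ℕ, ζ ^ k * (σ ^ k) α = α := by
    intro k
    induction k with
    | zero => rw [pow_zero, pow_zero, one_mul]; rfl
    | succ k ih =>
      have h1 : (σ ^ k) (ζ * σ α) = (σ ^ k) α := by rw [hshift]
      rw [map_mul, hσkζ] at h1
      have h2 : (σ ^ (k + 1)) α = (σ ^ k) (σ α) := by rw [pow_succ]; rfl
      calc ζ ^ (k + 1) * (σ ^ (k + 1)) α = ζ ^ k * (ζ * (σ ^ k) (σ α)) := by
            rw [h2]; ring
        _ = ζ ^ k * (σ ^ k) α := by rw [h1]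
        _ = α := ih
  obtain ⟨β, hβ⟩ := IsAlgClosed.exists_pow_nat_eq (k := ℂ) α (by omega : 0 < m)
  have hβ0 : β ≠ 0 := by
    intro h
    rw [h] at hβ
    exact hz0 (by simpa [hm0] using hβ.symm)
  have hσkβ0 : ∀ k : ℕ, (σ ^ k) β ≠ 0 := by
    intro k h
    exact hβ0 ((σ ^ k).injective (h.trans (map_zero _).symm))
  set N := ∏ k ∈ Finset.range m, (σ ^ k) β with hNdef
  have hσN : σ N = N := by
    rw [hNdef, map_prod]
    calc ∏ k ∈ Finset.range m, σ ((σ ^ k) β)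
        = ∏ k ∈ Finset.range m, (fun j => (σ ^ j) β) (k + 1) := by
          refine Finset.prod_congr rfl fun k _ => ?_
          show σ ((σ ^ k) β) = (σ ^ (k + 1)) β
          rw [pow_succ']
          rfl
      _ = N := shift_prod (fun j => (σ ^ j) β)
          (by show (σ ^ m) β = (σ ^ 0) β; rw [hσm, pow_zero]) (hσkβ0 0)
  set u := ∏ k ∈ Finset.range m, ζ ^ k with hudef
  have hNm : N ^ m * u = α ^ m := by
    rw [hNdef, hudef, ← Finset.prod_pow, ← Finset.prod_mul_distrib]
    calc ∏ k ∈ Finset.range m, ((σ ^ k) β ^ m * ζ ^ k)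
        = ∏ k ∈ Finset.range m, α := by
          refine Finset.prod_congr rfl fun k _ => ?_
          rw [← map_pow, hβ, mul_comm]
          exact heig k
      _ = α ^ m := by rw [Finset.prod_const, Finset.card_range]
  have hu1 : u ^ m = 1 := by
    rw [hudef, ← Finset.prod_pow]
    refine Finset.prod_eq_one fun k _ => ?_
    rw [← pow_mul, mul_comm, pow_mul, hζm, one_pow]
  obtain ⟨d, hd⟩ := IsAlgClosed.exists_pow_nat_eq (k := ℂ) u (by omega : 0 < m)
  have hσd : σ d = d := by
    refine hfixroot (Nat.mul_ne_zero hm0 hm0) ?_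
    rw [pow_mul, hd, hu1]
  have hd0 : d ≠ 0 := by
    intro h
    rw [h, zero_pow hm0] at hd
    rw [← hd, zero_pow hm0] at hu1
    exact zero_ne_one hu1
  have hN0 : N ≠ 0 := by
    rw [hNdef]
    exact Finset.prod_ne_zero_iff.mpr fun k _ => hσkβ0 k
  have hdN0 : d * N ≠ 0 := mul_ne_zero hd0 hN0
  have hdNm : (d * N) ^ m = α ^ m := by
    rw [mul_pow, hd, mul_comm, hNm]
  set ω := α / (d * N) with hωdef
  have hωm : ω ^ m = 1 := by
    rw [hωdef, div_pow, hdNm, div_self (pow_ne_zero _ hz0)]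
  have hσω : σ ω = ω := hfixroot hm0 hωm
  have hαeq : α = ω * (d * N) := by
    rw [hωdef, div_mul_cancel₀ _ hdN0]
  have hσα : σ α = α := by
    rw [hαeq, map_mul, map_mul, hσω, hσd, hσN]
  rw [hσα] at hshift
  have hζα : (ζ - 1) * α = 0 := by
    rw [sub_mul, one_mul, hshift, sub_self]
  rcases mul_eq_zero.mp hζα with h | h
  · exact hζ1 (sub_eq_zero.mp h)
  · exact hz0 h
end

section
/- Every involution σ of an algebraically closed field k of characteristic 0 induces a non-identity automorphism of the algebraic closure of ℚ inside k: σ maps the subfield of elements of k that are algebraic over ℚ onto itself, and the restriction of σ to this subfield is not the identity. -/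
/-!
If an involution `σ` fixed every algebraic number, it would fix a square root `i` of `-1`.
Since `σ ≠ id`, some `z = y - σ y` is nonzero with `σ z = -z`; writing `z = r²`, we get
`(σ r)² = -r² = (i r)²`, so `σ r = ± i r`, and then `r = σ (σ r) = i² r = -r`, forcing `r = 0`.
-/

theorem RingEquiv.isAlgebraic_rat_apply_iff {R S : Type*} [Ring R] [Ring S] [Algebra ℚ R]
    [Algebra ℚ S] (f : R ≃+* S) {x : R} : IsAlgebraic ℚ (f x) ↔ IsAlgebraic ℚ x :=
  isAlgebraic_algHom_iff f.toRingHom.toRatAlgHom f.injective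

theorem eq_zero_of_involutive_of_map_sq_eq_neg {k : Type*} [Field k] [NeZero (2 : k)]
    {σ : k →+* k} (hσ : Function.Involutive σ) {i : k} (hi : i ^ 2 = -1) (hσi : σ i = i)
    {r : k} (hr : σ (r ^ 2) = -r ^ 2) : r = 0 := by
  have hsq : σ r ^ 2 = (i * r) ^ 2 := by rw [← map_pow, hr, mul_pow, hi]; ring
  have hr_neg : r = -r := by
    rcases sq_eq_sq_iff_eq_or_eq_neg.mp hsq with h | h
    · calc r = σ (σ r) := (hσ r).symm
        _ = i ^ 2 * r := by rw [h, map_mul, hσi, h]; ring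
        _ = -r := by rw [hi]; ring
    · calc r = σ (σ r) := (hσ r).symm
        _ = i ^ 2 * r := by rw [h, map_neg, map_mul, hσi, h]; ring
        _ = -r := by rw [hi]; ring
  have h2r : (2 : k) * r = 0 := by linear_combination hr_neg
  exact (mul_eq_zero.mp h2r).resolve_left two_ne_zero

theorem RingEquiv.eq_refl_of_involutive_of_map_sqrt_neg_one {k : Type*} [Field k] [IsAlgClosed k]
    [NeZero (2 : k)] (σ : k ≃+* k) (hσ : Function.Involutive σ) {i : k} (hi : i ^ 2 = -1)
    (hσi : σ i = i) : σ = RingEquiv.refl k := by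
  ext y
  by_contra hy
  obtain ⟨r, hr⟩ := IsAlgClosed.exists_pow_nat_eq (y - σ y) two_pos
  have hσr : σ.toRingHom (r ^ 2) = -r ^ 2 := by
    change σ (r ^ 2) = _
    rw [hr, map_sub, hσ y]
    ring
  have hr0 := eq_zero_of_involutive_of_map_sq_eq_neg (σ := σ.toRingHom) hσ hi hσi hσr
  rw [hr0, zero_pow two_ne_zero, eq_comm, sub_eq_zero] at hr
  exact hy hr.symm

theorem stmt_8 (k : Type*) [Field k] [IsAlgClosed k] [CharZero k]
    (σ : k ≃+* k) (hinv : ∀ x, σ (σ x) = x) (hne : σ ≠ RingEquiv.refl k) :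
    σ '' {x : k | IsAlgebraic ℚ x} = {x : k | IsAlgebraic ℚ x} ∧
    ∃ x : k, IsAlgebraic ℚ x ∧ σ x ≠ x := by
  have hσ : Function.Involutive σ := hinv
  refine ⟨?_, ?_⟩
  · rw [hσ.image_eq_preimage_symm]
    ext x
    exact σ.isAlgebraic_rat_apply_iff
  · obtain ⟨i, hi⟩ := IsAlgClosed.exists_pow_nat_eq (-1 : k) two_pos
    have hi_alg : IsAlgebraic ℚ i := IsAlgebraic.of_pow two_pos (hi ▸ isAlgebraic_one.neg)
    exact ⟨i, hi_alg, fun hσi ↦ hne (σ.eq_refl_of_involutive_of_map_sqrt_neg_one hσ hi hσi)⟩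
end

section
/- (Baby Lefschetz Principle) Let k be a field of characteristic 0 which is finitely generated as a field over its prime field ℚ (i.e. k is generated as a field by a finite subset together with ℚ). Then there exists an injective ring homomorphism (field embedding) from k into the field of complex numbers ℂ. -/
open Cardinal

/-- A field generated (as a field) by a finite set is countable. -/
lemma countable_of_finset_closure_eq_top {k : Type*} [Field k]
    (S : Finset k) (h : Subfield.closure (S : Set k) = ⊤) : Countable k := by
  classical
  -- the subring generated by S is contained in the range of evaluation of
  -- integer multivariate polynomials
  have : Countable (MvPolynomial S ℤ) := Countable.of_equiv _ AddMonoidAlgebra.coeffEquiv.symm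
  let f : MvPolynomial S ℤ →+* k := (MvPolynomial.aeval (Subtype.val : S → k)).toRingHom
  have hsub : Subring.closure (S : Set k) ≤ f.range := by
    apply Subring.closure_le.2
    intro x hx
    exact ⟨MvPolynomial.X ⟨x, hx⟩, by simp [f]⟩
  have hcr : (Subring.closure (S : Set k) : Set k).Countable := by
    have : (f.range : Set k).Countable := Set.countable_range f
    exact this.mono hsub
  -- every element of k is a quotient of two elements of the subring closure
  have hsurj : ∀ x : k, ∃ p : (Subring.closure (S : Set k)) × (Subring.closure (S : Set k)),
      (p.1 : k) / (p.2 : k) = x := by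
    intro x
    have hx : x ∈ Subfield.closure (S : Set k) := h ▸ Subfield.mem_top x
    obtain ⟨y, hy, z, hz, hyz⟩ := Subfield.mem_closure_iff.1 hx
    exact ⟨(⟨y, hy⟩, ⟨z, hz⟩), hyz⟩
  have : Countable (Subring.closure (S : Set k)) := hcr.to_subtype
  exact Function.Surjective.countable (f := fun p :
      (Subring.closure (S : Set k)) × (Subring.closure (S : Set k)) => (p.1 : k) / (p.2 : k))
    (fun x => hsurj x)

set_option synthInstance.maxHeartbeats 1000000 in
set_option maxHeartbeats 1000000 in
theorem stmt_10 (k : Type*) [Field k] [CharZero k]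
    (hfg : ∃ S : Finset k, Subfield.closure (S : Set k) = ⊤) :
    ∃ f : k →+* ℂ, Function.Injective f := by
  classical
  obtain ⟨S, hS⟩ := hfg
  have hcount : Countable k := countable_of_finset_closure_eq_top S hS
  have hsmall : Small.{0} k := Countable.toSmall k
  -- shrink k to a type in universe 0
  let k₀ : Type := Shrink.{0} k
  let e : k₀ ≃+* k := Shrink.ringEquiv k
  have hk₀ : CharZero k₀ := e.toRingHom.charZero
  -- a big algebraically closed field of cardinality continuum containing k₀
  let A : Type := MvPolynomial ℝ k₀
  let F : Type := FractionRing A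
  let M : Type := AlgebraicClosure F
  -- injections k → k₀ → A → F → M
  let f₁ : k →+* A := (MvPolynomial.C : k₀ →+* A).comp e.symm.toRingHom
  let f₂ : A →+* F := algebraMap A F
  let f₃ : F →+* M := algebraMap F M
  have hf₁ : Function.Injective f₁ :=
    (MvPolynomial.C_injective _ _).comp e.symm.injective
  have hf₂ : Function.Injective f₂ := IsFractionRing.injective A F
  have hf₃ : Function.Injective f₃ := (algebraMap F M).injective
  have hinj : Function.Injective ((f₃.comp f₂).comp f₁) := hf₃.comp (hf₂.comp hf₁)
  have hM : CharZero M := by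
    refine ⟨fun a b hab => ?_⟩
    have : ((f₃.comp f₂).comp f₁) (a : k) = ((f₃.comp f₂).comp f₁) (b : k) := by
      rw [map_natCast, map_natCast, hab]
    exact Nat.cast_injective (hinj this)
  -- cardinality computations
  have hA : #A = Cardinal.continuum := by
    have h1 : #A = max (max (Cardinal.lift.{0} #k₀) (Cardinal.lift.{0} #ℝ)) ℵ₀ :=
      MvPolynomial.cardinalMk_eq_max_lift
    have hk₀c : Countable k₀ := Countable.of_equiv k (equivShrink k)
    have hk0le : #k₀ ≤ 𝔠 := Cardinal.mk_le_aleph0.trans Cardinal.aleph0_le_continuum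
    rw [h1, Cardinal.lift_id, Cardinal.lift_id, Cardinal.mk_real,
      max_eq_right hk0le, max_eq_left Cardinal.aleph0_le_continuum]
  have hF : #F = Cardinal.continuum := by
    rw [Cardinal.mk_fractionRing, hA]
  have hFinf : Infinite F := by
    rw [Cardinal.infinite_iff, hF]
    exact Cardinal.aleph0_le_continuum
  have hMcard : #M = Cardinal.continuum := by
    have halg : ∀ x : M, IsAlgebraic F x := fun x =>
      (AlgebraicClosure.isAlgebraic F).isAlgebraic x
    have hnz : NoZeroSMulDivisors F M := inferInstance
    have : #M = #{x : M // IsAlgebraic F x} :=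
      (Cardinal.mk_congr (Equiv.subtypeUnivEquiv halg)).symm
    rw [this, Algebraic.cardinalMk_of_infinite F M, hF]
  have hMlt : ℵ₀ < #M := hMcard ▸ Cardinal.aleph0_lt_continuum
  have hMC : #M = #ℂ := by rw [hMcard, mk_complex]
  obtain ⟨g⟩ := IsAlgClosed.ringEquiv_of_equiv_of_charZero hMlt (Cardinal.eq.1 hMC)
  exact ⟨g.toRingHom.comp ((f₃.comp f₂).comp f₁), g.injective.comp hinj⟩
end

section
/- Let k be an algebraically closed field and let f and g be homogeneous polynomials of positive degree in three variables X, Y, Z with coefficients in k. Then f and g have a common nontrivial zero: there exists (a, b, c) ∈ k³ with (a, b, c) ≠ (0, 0, 0) such that f(a, b, c) = 0 and g(a, b, c) = 0. -/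
open MvPolynomial

noncomputable def degEquiv (σ : Type*) [DecidableEq σ] (d : ℕ) :
    {α : σ →₀ ℕ // α.degree = d} ≃ Sym σ d :=
  Equiv.subtypeEquiv Multiset.toFinsupp.toEquiv.symm (by
    intro α
    rw [Finsupp.degree_eq_weight_one]
    simp [Finsupp.weight, Finsupp.linearCombination, Finsupp.sum])

noncomputable instance (d : ℕ) :
    Fintype {α : Fin 3 →₀ ℕ // α.degree = d} := Fintype.ofEquiv _ (degEquiv (Fin 3) d).symm

instance (k : Type*) [Field k] (d : ℕ) :
    FiniteDimensional k (homogeneousSubmodule (Fin 3) k d) :=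
  Submodule.finiteDimensional_of_le (S₂ := restrictTotalDegree (Fin 3) k d)
    (fun p hp => (mem_restrictTotalDegree (Fin 3) d p).mpr (IsHomogeneous.totalDegree_le hp))

theorem finrank_homog (k : Type*) [Field k] (d : ℕ) :
    Module.finrank k (homogeneousSubmodule (Fin 3) k d) = (d + 2).choose 2 := by
  have hb : Module.Basis {α : Fin 3 →₀ ℕ // α.degree = d} k (homogeneousSubmodule (Fin 3) k d) := by
    have h := homogeneousSubmodule_eq_finsupp_supported (Fin 3) k d
    exact (basisRestrictSupport k {α : Fin 3 →₀ ℕ | α.degree = d}).map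
      (LinearEquiv.ofEq _ (homogeneousSubmodule (Fin 3) k d) (by rw [h]; rfl))
  rw [Module.finrank_eq_card_basis hb, Fintype.card_congr (degEquiv (Fin 3) d),
    Sym.card_sym_eq_choose]
  simp only [Fintype.card_fin]
  rw [show 3 + d - 1 = d + 2 by omega, ← Nat.choose_symm (by omega : 2 ≤ d + 2),
    show d + 2 - 2 = d by omega]

theorem two_mul_choose_two (n : ℕ) : 2 * (n + 2).choose 2 = (n + 2) * (n + 1) := by
  induction n with
  | zero => decide
  | succ m ih =>
    rw [show m + 1 + 2 = (m + 2) + 1 from rfl, Nat.choose_succ_succ (m+2) 1]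
    rw [Nat.mul_add, ih, Nat.choose_one_right]
    ring


theorem hc_mul {k : Type*} [Field k] {f : MvPolynomial (Fin 3) k} {m : ℕ}
    (hf : f.IsHomogeneous m) (p : MvPolynomial (Fin 3) k) (n : ℕ) :
    homogeneousComponent (n + m) (p * f) = homogeneousComponent n p * f := by
  conv_lhs => rw [← sum_homogeneousComponent p, Finset.sum_mul, map_sum]
  have key : ∀ i, homogeneousComponent (n + m) (homogeneousComponent i p * f)
      = if i = n then homogeneousComponent i p * f else 0 := by
    intro i
    have hmem : homogeneousComponent i p * f ∈ homogeneousSubmodule (Fin 3) k (i + m) :=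
      (homogeneousComponent_isHomogeneous i p).mul hf
    rw [homogeneousComponent_of_mem hmem]
    by_cases h : i = n
    · simp [h]
    · simp [h, Ne.symm h, show ¬ (n + m = i + m) by omega]
  simp_rw [key]
  rw [Finset.sum_ite_eq' (Finset.range (p.totalDegree + 1)) n
    (fun i => homogeneousComponent i p * f)]
  by_cases h : n ∈ Finset.range (p.totalDegree + 1)
  · rw [if_pos h]
  · rw [if_neg h, homogeneousComponent_eq_zero _ p (by simpa using h), zero_mul]


theorem deg3 (α : Fin 3 →₀ ℕ) : α.degree = α 0 + α 1 + α 2 := by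
  rw [Finsupp.degree_apply, Finset.sum_subset (Finset.subset_univ α.support)
    (fun i _ hi => by simpa using Finsupp.notMem_support_iff.mp hi)]
  exact Fin.sum_univ_three α

-- α in support, not single 0 dg → α 1 ≠ 0 ∨ α 2 ≠ 0
theorem not_single {dg : ℕ} (α : Fin 3 →₀ ℕ) (hd : α.degree = dg)
    (hne : α ≠ Finsupp.single 0 dg) : α 1 ≠ 0 ∨ α 2 ≠ 0 := by
  by_contra h
  push_neg at h
  apply hne
  ext i
  have h3 := deg3 α
  fin_cases i <;> simp_all [Finsupp.single_apply] <;> omega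

theorem eval_e0 {k : Type*} [Field k] {g : MvPolynomial (Fin 3) k} {dg : ℕ}
    (hg : g.IsHomogeneous dg) :
    eval (![1,0,0] : Fin 3 → k) g = coeff (Finsupp.single 0 dg) g := by
  conv_lhs => rw [g.as_sum, map_sum]
  rw [Finset.sum_eq_single (Finsupp.single 0 dg)]
  · rw [eval_monomial, Finsupp.prod]
    by_cases hdg0 : dg = 0
    · simp [hdg0]
    · rw [Finsupp.support_single_ne_zero _ hdg0]
      simp
  · intro α hα hne
    have hd : α.degree = dg := by rw [Finsupp.degree_eq_weight_one]; exact hg (by simpa using hα)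
    rcases not_single α hd hne with h | h
    · rw [eval_monomial]
      apply mul_eq_zero_of_right
      exact Finset.prod_eq_zero (Finsupp.mem_support_iff.mpr h)
        (by simp [zero_pow h])
    · rw [eval_monomial]
      apply mul_eq_zero_of_right
      exact Finset.prod_eq_zero (Finsupp.mem_support_iff.mpr h)
        (by simp [zero_pow h])
  · intro h
    simp [coeff, Finsupp.notMem_support_iff.mp h]

theorem coeff_q {k : Type*} [Field k] {g : MvPolynomial (Fin 3) k} {dg : ℕ} (hdg : 0 < dg)
    (hg : g.IsHomogeneous dg) :
    (MvPolynomial.aeval (![Polynomial.X, 1, 0] : Fin 3 → Polynomial k) g).coeff dg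
      = coeff (Finsupp.single 0 dg) g := by
  conv_lhs => rw [g.as_sum, map_sum]
  rw [Polynomial.finset_sum_coeff, Finset.sum_eq_single (Finsupp.single 0 dg)]
  · rw [aeval_monomial, Finsupp.prod, Finsupp.support_single_ne_zero _ (by omega)]
    simp [Polynomial.coeff_C_mul, Polynomial.coeff_X_pow]
  · intro α hα hne
    have hd : α.degree = dg := by
      rw [Finsupp.degree_eq_weight_one]; exact hg (by simpa using hα)
    have h3 := deg3 α; rw [hd] at h3
    rw [aeval_monomial]
    rcases not_single α hd hne with h | h
    · -- α 1 ≠ 0 : if also α 2 = 0, then term is C c * X^(α 0) * 1^(α 1), coeff dg = 0 since α 0 < dg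
      by_cases h2 : α 2 = 0
      · have hprod : (Finsupp.prod α fun i e => (![Polynomial.X, 1, 0] : Fin 3 → Polynomial k) i ^ e)
            = Polynomial.X ^ (α 0) := by
          rw [Finsupp.prod_fintype _ _ (fun i => pow_zero _)]
          rw [Fin.prod_univ_three]
          simp [h2]
        rw [hprod, Polynomial.algebraMap_eq, Polynomial.coeff_C_mul, Polynomial.coeff_X_pow, if_neg (by omega), mul_zero]
      · have : (Finsupp.prod α fun i e => (![Polynomial.X, 1, 0] : Fin 3 → Polynomial k) i ^ e) = 0 :=
          Finset.prod_eq_zero (Finsupp.mem_support_iff.mpr h2) (by simp [zero_pow h2])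
        rw [this, mul_zero, Polynomial.coeff_zero]
    · have : (Finsupp.prod α fun i e => (![Polynomial.X, 1, 0] : Fin 3 → Polynomial k) i ^ e) = 0 :=
        Finset.prod_eq_zero (Finsupp.mem_support_iff.mpr h) (by simp [zero_pow h])
      rw [this, mul_zero, Polynomial.coeff_zero]
  · intro h
    simp [coeff, Finsupp.notMem_support_iff.mp h]

theorem one_poly {k : Type*} [Field k] [IsAlgClosed k] (g : MvPolynomial (Fin 3) k)
    {dg : ℕ} (hdg : 0 < dg) (hg : g.IsHomogeneous dg) :
    ∃ v : Fin 3 → k, v ≠ 0 ∧ eval v g = 0 := by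
  set q : Polynomial k := MvPolynomial.aeval (![Polynomial.X, 1, 0] : Fin 3 → Polynomial k) g with hq
  have heval : ∀ x : k, eval (![x, 1, 0] : Fin 3 → k) g = q.eval x := by
    intro x
    have h1 := AlgHom.congr_fun
      (comp_aeval (![Polynomial.X, 1, 0] : Fin 3 → Polynomial k) (Polynomial.aeval x)) g
    simp only [AlgHom.comp_apply] at h1
    have h2 : (fun i => Polynomial.aeval x ((![Polynomial.X, 1, 0] : Fin 3 → Polynomial k) i))
        = (![x, 1, 0] : Fin 3 → k) := by funext i; fin_cases i <;> simp
    rw [hq, ← Polynomial.coe_aeval_eq_eval, h1, h2]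
    rfl
  by_cases hdeg : q.degree = 0
  · -- q is a nonzero constant; then coeff dg q = 0, so g(1,0,0)=0
    refine ⟨![1,0,0], by intro h; simpa using congrFun h 0, ?_⟩
    rw [eval_e0 hg, ← coeff_q hdg hg]
    exact Polynomial.coeff_eq_zero_of_degree_lt (by rw [hdeg]; exact_mod_cast hdg)
  · obtain ⟨x, hx⟩ := IsAlgClosed.exists_root q hdeg
    exact ⟨![x, 1, 0], by intro h; simpa using congrFun h 1, by rw [heval x]; exact hx⟩

set_option maxHeartbeats 1000000 in
set_option synthInstance.maxHeartbeats 400000 in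
theorem stmt_15 (k : Type*) [Field k] [IsAlgClosed k]
    (f g : MvPolynomial (Fin 3) k) (df dg : ℕ) (hdf : 0 < df) (hdg : 0 < dg)
    (hf : f.IsHomogeneous df) (hg : g.IsHomogeneous dg) :
    ∃ v : Fin 3 → k, v ≠ 0 ∧ MvPolynomial.eval v f = 0 ∧ MvPolynomial.eval v g = 0 := by
  by_cases hf0 : f = 0
  · obtain ⟨v, hv, hvg⟩ := one_poly g hdg hg
    exact ⟨v, hv, by simp [hf0], hvg⟩
  by_cases hg0 : g = 0
  · obtain ⟨v, hv, hvf⟩ := one_poly f hdf hf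
    exact ⟨v, hv, hvf, by simp [hg0]⟩
  by_contra hcon
  push_neg at hcon
  set I : Ideal (MvPolynomial (Fin 3) k) := Ideal.span {f, g} with hI
  have hfI : f ∈ I := Ideal.subset_span (by simp)
  have hgI : g ∈ I := Ideal.subset_span (by simp)
  -- Step 1: each X i has a power in I
  have hXN : ∀ i : Fin 3, ∃ n : ℕ, (X i : MvPolynomial (Fin 3) k) ^ n ∈ I := by
    intro i
    have hrad : (X i : MvPolynomial (Fin 3) k) ∈ I.radical := by
      rw [← MvPolynomial.vanishingIdeal_zeroLocus_eq_radical (K := k)]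
      rw [MvPolynomial.mem_vanishingIdeal_iff]
      intro x hx
      have hx0 : x = 0 := by
        by_contra hx0
        exact hcon x hx0 (hx f hfI) (hx g hgI)
      simp [hx0]
    exact hrad
  obtain ⟨N0, hN0⟩ := hXN 0
  obtain ⟨N1, hN1⟩ := hXN 1
  obtain ⟨N2, hN2⟩ := hXN 2
  set N : ℕ := N0 + N1 + N2 + 1 with hN
  have hXNI : ∀ i : Fin 3, (X i : MvPolynomial (Fin 3) k) ^ N ∈ I := by
    have key : ∀ (i : Fin 3) (n : ℕ), (X i : MvPolynomial (Fin 3) k) ^ n ∈ I → n ≤ N →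
        (X i : MvPolynomial (Fin 3) k) ^ N ∈ I := by
      intro i n hn hle
      rw [show N = n + (N - n) by omega, pow_add]
      exact Ideal.mul_mem_right _ _ hn
    intro i
    fin_cases i
    · exact key 0 N0 hN0 (by omega)
    · exact key 1 N1 hN1 (by omega)
    · exact key 2 N2 hN2 (by omega)
  -- Step 2: every monomial of degree ≥ 3N is in I
  have hmono : ∀ α : Fin 3 →₀ ℕ, 3 * N ≤ α.degree → (monomial α (1 : k)) ∈ I := by
    intro α hα
    have h3 := deg3 α
    have : ∃ i : Fin 3, N ≤ α i := by
      by_contra h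
      push_neg at h
      have h0 := h 0; have h1 := h 1; have h2 := h 2
      omega
    obtain ⟨i, hi⟩ := this
    have hsplit : Finsupp.single i N + (α - Finsupp.single i N) = α :=
      add_tsub_cancel_of_le (Finsupp.single_le_iff.mpr hi)
    have : (monomial α (1 : k)) = (X i : MvPolynomial (Fin 3) k) ^ N
        * monomial (α - Finsupp.single i N) 1 := by
      rw [X_pow_eq_monomial, monomial_mul, hsplit, one_mul]
    rw [this]
    exact Ideal.mul_mem_right _ _ (hXNI i)
  have hhomI : ∀ (d : ℕ) (p : MvPolynomial (Fin 3) k), 3 * N ≤ d → p.IsHomogeneous d → p ∈ I := by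
    intro d p hd hp
    rw [p.as_sum]
    apply Ideal.sum_mem
    intro α hα
    have hdeg : α.degree = d := by
      rw [Finsupp.degree_eq_weight_one]; exact hp (by simpa using hα)
    have : (monomial α (coeff α p)) = C (coeff α p) * monomial α 1 := by
      rw [C_mul_monomial, mul_one]
    rw [this]
    exact Ideal.mul_mem_left _ _ (hmono α (by omega))
  -- Step 3: the linear map
  set e : ℕ := 3 * N with he
  set A := homogeneousSubmodule (Fin 3) k (e + dg) with hA
  set B := homogeneousSubmodule (Fin 3) k (e + df) with hB
  set W := homogeneousSubmodule (Fin 3) k (e + dg + df) with hW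
  set C0 := homogeneousSubmodule (Fin 3) k e with hC0
  have memW_f : ∀ a : MvPolynomial (Fin 3) k, a.IsHomogeneous (e + dg) →
      (a * f).IsHomogeneous (e + dg + df) := fun a ha => ha.mul hf
  have memW_g : ∀ b : MvPolynomial (Fin 3) k, b.IsHomogeneous (e + df) →
      (b * g).IsHomogeneous (e + dg + df) := by
    intro b hb
    have := hb.mul hg
    rwa [show e + df + dg = e + dg + df by omega] at this
  set φ0 : (A × B) →ₗ[k] MvPolynomial (Fin 3) k :=
    ((LinearMap.mulRight k f).comp (A.subtype.comp (LinearMap.fst k A B)))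
      + ((LinearMap.mulRight k g).comp (B.subtype.comp (LinearMap.snd k A B))) with hφ0
  have hφ0mem : ∀ x : A × B, φ0 x ∈ W := by
    rintro ⟨⟨a, ha⟩, ⟨b, hb⟩⟩
    exact Submodule.add_mem _ (memW_f a ha) (memW_g b hb)
  set φ : (A × B) →ₗ[k] W := LinearMap.codRestrict W φ0 hφ0mem with hφ
  -- Step 4: φ surjective
  have hsurj : Function.Surjective φ := by
    rintro ⟨w, hw⟩
    have hwI : w ∈ I := hhomI _ w (by omega) hw
    obtain ⟨a, b, hab⟩ := Ideal.mem_span_pair.mp hwI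
    have hw' : homogeneousComponent (e + dg + df) w = w :=
      by rw [homogeneousComponent_of_mem hw, if_pos rfl]
    have hdecomp : homogeneousComponent (e + dg) a * f + homogeneousComponent (e + df) b * g = w := by
      rw [← hc_mul hf a (e + dg)]
      rw [show e + dg + df = e + df + dg by omega, ← hc_mul hg b (e + df)]
      rw [← map_add, show e + df + dg = e + dg + df by omega, hab, hw']
    refine ⟨⟨⟨homogeneousComponent (e + dg) a, homogeneousComponent_mem _ _⟩,
      ⟨homogeneousComponent (e + df) b, homogeneousComponent_mem _ _⟩⟩, ?_⟩
    apply Subtype.ext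
    simpa [hφ, hφ0] using hdecomp
  -- Step 5: injection of C0 into ker φ
  set ψ1 : C0 →ₗ[k] A := LinearMap.codRestrict A
    ((LinearMap.mulRight k g).comp C0.subtype)
    (by rintro ⟨h, hh⟩
        show (h * g).IsHomogeneous (e + dg)
        exact hh.mul hg) with hψ1
  set ψ2 : C0 →ₗ[k] B := LinearMap.codRestrict B
    ((LinearMap.mulRight k (-f)).comp C0.subtype)
    (by rintro ⟨h, hh⟩
        show (h * (-f)).IsHomogeneous (e + df)
        rw [mul_neg]
        exact (hh.mul hf).neg) with hψ2
  set ψ : C0 →ₗ[k] (A × B) := LinearMap.prod ψ1 ψ2 with hψ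
  have hψker : ∀ h : C0, ψ h ∈ LinearMap.ker φ := by
    rintro ⟨h, hh⟩
    rw [LinearMap.mem_ker]
    apply Subtype.ext
    show (h * g) * f + (h * (-f)) * g = 0
    ring
  have hψinj : Function.Injective ψ := by
    intro h1 h2 h12
    have : ψ1 h1 = ψ1 h2 := congrArg Prod.fst h12
    have hgg : (h1 : MvPolynomial (Fin 3) k) * g = (h2 : MvPolynomial (Fin 3) k) * g :=
      congrArg Subtype.val this
    apply Subtype.ext
    exact mul_right_cancel₀ hg0 hgg
  -- Step 6: dimension count
  have hrank := LinearMap.finrank_range_add_finrank_ker φ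
  have hrange : Module.finrank k (LinearMap.range φ) = Module.finrank k W := by
    rw [LinearMap.range_eq_top.mpr hsurj, finrank_top]
  have hker : Module.finrank k C0 ≤ Module.finrank k (LinearMap.ker φ) := by
    apply LinearMap.finrank_le_finrank_of_injective
      (f := LinearMap.codRestrict (LinearMap.ker φ) ψ hψker)
    intro x y hxy
    exact hψinj (congrArg Subtype.val hxy)
  have hprod : Module.finrank k (A × B) = Module.finrank k A + Module.finrank k B :=
    Module.finrank_prod
  rw [hprod, hrange] at hrank
  have hAr : Module.finrank k A = (e + dg + 2).choose 2 := finrank_homog k _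
  have hBr : Module.finrank k B = (e + df + 2).choose 2 := finrank_homog k _
  have hWr : Module.finrank k W = (e + dg + df + 2).choose 2 := finrank_homog k _
  have hCr : Module.finrank k C0 = (e + 2).choose 2 := finrank_homog k _
  have hineq : (e + dg + 2).choose 2 + (e + df + 2).choose 2
      ≥ (e + dg + df + 2).choose 2 + (e + 2).choose 2 := by
    rw [← hAr, ← hBr, ← hWr, ← hCr]
    omega
  have h2 : 2 * ((e + dg + 2).choose 2 + (e + df + 2).choose 2)
      ≥ 2 * ((e + dg + df + 2).choose 2 + (e + 2).choose 2) := by omega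
  rw [Nat.mul_add, Nat.mul_add, two_mul_choose_two, two_mul_choose_two,
    two_mul_choose_two, two_mul_choose_two] at h2
  have hid : (e + dg + df + 2) * (e + dg + df + 1) + (e + 2) * (e + 1)
      = (e + dg + 2) * (e + dg + 1) + (e + df + 2) * (e + df + 1) + 2 * (df * dg) := by ring
  have hpos : 0 < df * dg := Nat.mul_pos hdf hdg
  omega
end
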